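/- The group generated by the Hopf covering transformation acts freely on ℂ² \ {0}: fix α, β, λ ∈ ℂ and m ∈ ℕ with 0 < |α| ≤ |β| < 1 and (β^m − α)λ = 0, and define H : ℂ² → ℂ² by H(z, w) = (αz + λw^m, βw). Then for every p ∈ ℂ² with p ≠ (0,0) and every natural number n ≥ 1, the n-th iterate satisfies H^[n](p) ≠ p. -/

import Mathlib

/-! The second coordinate of `H^[n] (z, w)` is `β ^ n * w`, so a periodic point with
`w ≠ 0` would force `‖β‖ = 1`. On the axis `w = 0` the resonance term `λ w ^ m` vanishes
(for `m = 0` because `α ≠ 1` turns the relation into `λ = 0`), so there `H` is `z ↦ α z`,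
and a periodic point with `z ≠ 0` would force `‖α‖ = 1`. Both are excluded by
`‖α‖ ≤ ‖β‖ < 1`. -/

open Function

section HopfMap

variable {R : Type*} [Semiring R]

def hopfMap (α β l : R) (m : ℕ) (p : R × R) : R × R :=
  (α * p.1 + l * p.2 ^ m, β * p.2)

variable (α β l : R) (m : ℕ)

theorem semiconj_snd_hopfMap : Semiconj Prod.snd (hopfMap α β l m) (β * ·) :=
  fun _ ↦ rfl

theorem hopfMap_iterate_snd (n : ℕ) (p : R × R) :
    ((hopfMap α β l m)^[n] p).2 = β ^ n * p.2 := by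
  rw [(semiconj_snd_hopfMap α β l m).iterate_right n p, mul_left_iterate_apply]

variable {l m}

theorem semiconj_hopfMap_axis (hl : l * 0 ^ m = 0) :
    Semiconj (fun z : R ↦ (z, 0)) (α * ·) (hopfMap α β l m) := by
  intro z
  simp [hopfMap, hl]

theorem hopfMap_iterate_axis (hl : l * 0 ^ m = 0) (n : ℕ) (z : R) :
    (hopfMap α β l m)^[n] (z, 0) = (α ^ n * z, 0) := by
  rw [← (semiconj_hopfMap_axis α β hl).iterate_right n z, mul_left_iterate_apply]

end HopfMap

theorem mul_zero_pow_eq_zero_of_sub_mul_eq_zero {R : Type*} [Ring R] [NoZeroDivisors R]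
    {α β l : R} {m : ℕ} (hrel : (β ^ m - α) * l = 0) (hα : α ≠ 1) : l * 0 ^ m = 0 := by
  rcases m with _ | m
  · rw [pow_zero] at hrel ⊢
    rw [mul_one]
    exact (mul_eq_zero.mp hrel).resolve_left (sub_ne_zero.mpr hα.symm)
  · rw [zero_pow m.succ_ne_zero, mul_zero]

theorem norm_eq_one_of_pow_mul_eq_self {K : Type*} [NormedDivisionRing K] {a x : K} {n : ℕ}
    (hn : n ≠ 0) (hx : x ≠ 0) (h : a ^ n * x = x) : ‖a‖ = 1 := by
  have han : a ^ n = 1 := mul_right_cancel₀ hx (h.trans (one_mul x).symm)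
  rw [← pow_eq_one_iff_of_nonneg (norm_nonneg a) hn, ← norm_pow, han, norm_one]

theorem hopf_map_free_action_general (α β l : ℂ) (m : ℕ)
    (hαβ : ‖α‖ ≤ ‖β‖)
    (hβ : ‖β‖ < 1) (hrel : (β ^ m - α) * l = 0)
    (H : ℂ × ℂ → ℂ × ℂ) (hH : ∀ p : ℂ × ℂ, H p = (α * p.1 + l * p.2 ^ m, β * p.2)) :
    ∀ p : ℂ × ℂ, p ≠ (0, 0) → ∀ n : ℕ, 1 ≤ n → H^[n] p ≠ p := by
  rintro ⟨z, w⟩ hp n hn hper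
  obtain rfl : H = hopfMap α β l m := funext hH
  have hn0 : n ≠ 0 := Nat.one_le_iff_ne_zero.mp hn
  by_cases hw : w = 0
  · subst hw
    have hz : z ≠ 0 := fun hz ↦ hp (by rw [hz])
    have hα : ‖α‖ < 1 := hαβ.trans_lt hβ
    have hl : l * 0 ^ m = 0 :=
      mul_zero_pow_eq_zero_of_sub_mul_eq_zero hrel (by rintro rfl; simp at hα)
    rw [hopfMap_iterate_axis α β hl, Prod.mk.injEq] at hper
    exact hα.ne (norm_eq_one_of_pow_mul_eq_self hn0 hz hper.1)
  · have hper₂ := congrArg Prod.snd hper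
    rw [hopfMap_iterate_snd] at hper₂
    exact hβ.ne (norm_eq_one_of_pow_mul_eq_self hn0 hw hper₂)

/-- The group generated by the Hopf covering transformation acts freely on
`ℂ² \ {0}`: no nonzero point is fixed by any nontrivial iterate of `H`. -/
theorem hopf_map_free_action (α β l : ℂ) (m : ℕ)
    (hα : 0 < ‖α‖) (hαβ : ‖α‖ ≤ ‖β‖)
    (hβ : ‖β‖ < 1) (hrel : (β ^ m - α) * l = 0)
    (H : ℂ × ℂ → ℂ × ℂ) (hH : ∀ p : ℂ × ℂ, H p = (α * p.1 + l * p.2 ^ m, β * p.2)) :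
    ∀ p : ℂ × ℂ, p ≠ (0, 0) → ∀ n : ℕ, 1 ≤ n → H^[n] p ≠ p :=
  hopf_map_free_action_general α β l m hαβ hβ hrel H hH
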